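/- Under the hypotheses of the previous statement, if additionally ‖ξ(0)‖ ≤ M, then ‖ξ(t)‖ ≤ δ for all t ≥ T₁(k) := (2/(kσ₂))·log(M/δ), provided k ≥ 2b/(σ₂ δ) and M ≥ δ; i.e., the bound ‖ξ(t)‖ ≤ max{ exp(-(kσ₂/2)t)·M, δ } holds. -/

import Mathlib

/-!
With `u = ‖ξ‖²`, coercivity of `A` and `‖r‖ ≤ b ≤ kσ₂δ/2` give `u' ≤ -kσ₂ u` as long as `‖ξ‖ ≥ δ`.
Hence the ball of radius `δ` is forward invariant, and before `ξ` enters it `e^{kσ₂ t} u(t)` is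
nonincreasing, i.e. `‖ξ(t)‖ ≤ M e^{-kσ₂ t / 2}`.
-/

open Matrix Set Real

section ScalarComparison

variable {u u' : ℝ → ℝ}

theorem le_of_hasDerivAt_neg_at_level {D s t : ℝ} (hu : ∀ x, HasDerivAt u (u' x) x)
    (hlevel : ∀ x, u x = D → u' x < 0) (hst : s ≤ t) (hs : u s ≤ D) : u t ≤ D :=
  image_le_of_deriv_right_lt_deriv_boundary' (B := fun _ => D)
    (fun x _ => (hu x).continuousAt.continuousWithinAt) (fun x _ => (hu x).hasDerivWithinAt)
    hs continuousOn_const (fun _ _ => hasDerivWithinAt_const _ _ _)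
    (fun x _ hx => hlevel x hx) (right_mem_Icc.mpr hst)

theorem le_mul_exp_of_hasDerivAt_le {c a b : ℝ} (hu : ∀ x, HasDerivAt u (u' x) x)
    (hab : a ≤ b) (hdecay : ∀ x ∈ Icc a b, u' x ≤ -c * u x) :
    u b ≤ u a * exp (-c * (b - a)) := by
  set g : ℝ → ℝ := fun x => exp (c * x) * u x
  have hg : ∀ x, HasDerivAt g (exp (c * x) * (c * u x + u' x)) x := fun x => by
    refine ((((hasDerivAt_id' x).const_mul c).exp).mul (hu x)).congr_deriv ?_
    ring
  have hg_le : g b ≤ g a :=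
    image_le_of_deriv_right_le_deriv_boundary (B := fun _ => g a) (B' := fun _ => 0)
      (fun x _ => (hg x).continuousAt.continuousWithinAt) (fun x _ => (hg x).hasDerivWithinAt)
      le_rfl continuousOn_const (fun _ _ => hasDerivWithinAt_const _ _ _)
      (fun x hx => mul_nonpos_of_nonneg_of_nonpos (exp_pos _).le
        (by linarith [hdecay x (Ico_subset_Icc_self hx)]))
      (right_mem_Icc.mpr hab)
  have hcancel : ∀ x, exp (-c * x) * g x = u x := fun x => by
    simp only [g, ← mul_assoc, ← exp_add, neg_mul, neg_add_cancel, exp_zero, one_mul]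
  calc u b = exp (-c * b) * g b := (hcancel b).symm
    _ ≤ exp (-c * b) * g a := by gcongr
    _ = u a * exp (-c * (b - a)) := by
        simp only [g, ← mul_assoc, ← exp_add]
        ring_nf

theorem le_max_mul_exp_of_hasDerivAt_le {c D M t : ℝ} (hc : 0 < c) (hD : 0 < D)
    (hu : ∀ x, HasDerivAt u (u' x) x) (hdecay : ∀ x, D ≤ u x → u' x ≤ -c * u x)
    (h0 : u 0 ≤ M) (ht : 0 ≤ t) : u t ≤ max (M * exp (-c * t)) D := by
  by_cases hinside : u t ≤ D
  · exact le_max_of_le_right hinside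
  have hlevel : ∀ x, u x = D → u' x < 0 := fun x hx => by
    have := hdecay x hx.ge
    rw [hx] at this
    linarith [mul_pos hc hD]
  have houtside : ∀ x ∈ Icc 0 t, D ≤ u x := fun x hx =>
    le_of_not_gt fun hx' => hinside (le_of_hasDerivAt_neg_at_level hu hlevel hx.2 hx'.le)
  have hdecay_t := le_mul_exp_of_hasDerivAt_le hu ht fun x hx => hdecay x (houtside x hx)
  rw [sub_zero] at hdecay_t
  exact le_max_of_le_left (hdecay_t.trans (by gcongr))

end ScalarComparison

theorem two_mul_inner_neg_smul_add_le {E : Type*} [NormedAddCommGroup E] [InnerProductSpace ℝ E]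
    (L : E →ₗ[ℝ] E) {σ k b δ : ℝ} (hL : ∀ v, σ * ‖v‖ ^ 2 ≤ inner ℝ v (L v))
    (hσ : 0 ≤ σ) (hk : 0 ≤ k) (hb : 2 * b ≤ k * σ * δ) {x y : E} (hx : δ ≤ ‖x‖) (hy : ‖y‖ ≤ b) :
    2 * inner ℝ x (-k • L x + y) ≤ -(k * σ) * ‖x‖ ^ 2 := by
  have hcoer := hL x
  have hxy : inner ℝ x y ≤ ‖x‖ * b :=
    (real_inner_le_norm x y).trans (mul_le_mul_of_nonneg_left hy (norm_nonneg x))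
  rw [inner_add_right, real_inner_smul_right]
  nlinarith [mul_le_mul_of_nonneg_left hx (mul_nonneg (mul_nonneg hk hσ) (norm_nonneg x)),
    mul_le_mul_of_nonneg_left hcoer hk, mul_le_mul_of_nonneg_left hb (norm_nonneg x)]

theorem stmt_15_general (n : ℕ)
    (A : Matrix (Fin n) (Fin n) ℝ)
    (σ₂ : ℝ) (hσ : 0 < σ₂)
    (heig : ∀ v : EuclideanSpace ℝ (Fin n),
      σ₂ * ‖v‖ ^ 2 ≤ (inner ℝ v (Matrix.toEuclideanLin A v) : ℝ))
    (k b δ M : ℝ) (hδ : 0 < δ)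
    (hk : 2 * b / (σ₂ * δ) ≤ k) (hkpos : 0 < k)
    (r : ℝ → EuclideanSpace ℝ (Fin n)) (hr : ∀ t, ‖r t‖ ≤ b)
    (ξ : ℝ → EuclideanSpace ℝ (Fin n))
    (hξ : ∀ t, HasDerivAt ξ ((-k) • Matrix.toEuclideanLin A (ξ t) + r t) t)
    (hξ0 : ‖ξ 0‖ ≤ M) :
    ∀ t ≥ (0:ℝ), ‖ξ t‖ ≤ max (M * Real.exp (-(k * σ₂ / 2) * t)) δ := by
  intro t ht
  have hkσ : 0 < k * σ₂ := mul_pos hkpos hσ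
  have hb : 2 * b ≤ k * σ₂ * δ := by
    rw [div_le_iff₀ (mul_pos hσ hδ)] at hk
    linarith
  have hdecay : ∀ x, δ ^ 2 ≤ ‖ξ x‖ ^ 2 →
      2 * inner ℝ (ξ x) ((-k) • Matrix.toEuclideanLin A (ξ x) + r x) ≤ -(k * σ₂) * ‖ξ x‖ ^ 2 :=
    fun x hx => two_mul_inner_neg_smul_add_le _ heig hσ.le hkpos.le hb
      ((pow_le_pow_iff_left₀ hδ.le (norm_nonneg _) two_ne_zero).mp hx) (hr x)
  have hsq := le_max_mul_exp_of_hasDerivAt_le hkσ (pow_pos hδ 2) (fun x => (hξ x).norm_sq)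
    hdecay (pow_le_pow_left₀ (norm_nonneg _) hξ0 2) ht
  have hM : 0 ≤ M := (norm_nonneg _).trans hξ0
  have hexp : M ^ 2 * exp (-(k * σ₂) * t) = (M * exp (-(k * σ₂ / 2) * t)) ^ 2 := by
    rw [mul_pow, ← exp_nat_mul]; ring_nf
  rw [hexp] at hsq
  refine (pow_le_pow_iff_left₀ (norm_nonneg _) (hδ.le.trans (le_max_right _ _)) two_ne_zero).mp
    (hsq.trans (max_le ?_ ?_)) <;> gcongr
  exacts [le_max_left _ _, le_max_right _ _]

theorem stmt_15 (n : ℕ)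
    (A : Matrix (Fin n) (Fin n) ℝ) (hA : A.IsSymm)
    (σ₂ : ℝ) (hσ : 0 < σ₂)
    (heig : ∀ v : EuclideanSpace ℝ (Fin n),
      σ₂ * ‖v‖ ^ 2 ≤ (inner ℝ v (Matrix.toEuclideanLin A v) : ℝ))
    (k b δ M : ℝ) (hδ : 0 < δ) (hb : 0 ≤ b) (hM : δ ≤ M)
    (hk : 2 * b / (σ₂ * δ) ≤ k) (hkpos : 0 < k)
    (r : ℝ → EuclideanSpace ℝ (Fin n)) (hr : ∀ t, ‖r t‖ ≤ b)
    (ξ : ℝ → EuclideanSpace ℝ (Fin n))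
    (hξ : ∀ t, HasDerivAt ξ ((-k) • Matrix.toEuclideanLin A (ξ t) + r t) t)
    (hξ0 : ‖ξ 0‖ ≤ M) :
    ∀ t ≥ (0:ℝ), ‖ξ t‖ ≤ max (M * Real.exp (-(k * σ₂ / 2) * t)) δ :=
  stmt_15_general n A σ₂ hσ heig k b δ M hδ hk hkpos r hr ξ hξ hξ0
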